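/- arXiv:1412.4719 — 6 statements merged into one kernel-verified Lean document; each statement's English description precedes it below -/
import Mathlib

section
/- The function f : (ZMod p)^n → ℝ/ℤ defined by f(x) = (∑_{i=1}^n |x_i|)/p² mod 1, where |·| is the canonical lift of ZMod p to {0,…,p−1}, is a nonclassical polynomial of degree at most p, i.e., D_{h₁}⋯D_{h_{p+1}} f ≡ 0 for all h₁,…,h_{p+1} ∈ (ZMod p)^n. -/
open Finset

/-- Additive directional derivative `D_h f(x) = f(x+h) - f(x)`. -/
noncomputable def D {V M : Type*} [Add V] [AddCommGroup M] (h : V) (f : V → M) : V → M :=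
  fun x => f (x + h) - f x

/-- `f` is a nonclassical polynomial of degree at most `d`:
all `(d+1)`-fold iterated derivatives vanish identically. -/
def IsNCPoly {V M : Type*} [Add V] [AddCommGroup M] (d : ℕ) (f : V → M) : Prop :=
  ∀ hs : List V, hs.length = d + 1 → hs.foldr D f = 0

/-- `e(t) = exp(2πit)` on the torus `ℝ/ℤ`. -/
noncomputable def e : AddCircle (1 : ℝ) → ℂ :=
  Function.Periodic.lift (f := fun t : ℝ => Complex.exp (2 * (Real.pi : ℂ) * Complex.I * (t : ℂ)))
    (by
      intro t
      dsimp only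
      rw [Complex.ofReal_add, Complex.ofReal_one, mul_add, mul_one, Complex.exp_add,
        Complex.exp_two_pi_mul_I, mul_one])

/-!
Write `f` as the sum over coordinates of `g(a) = val a / p²`. Since
`val (a + b) = val a + val b - p·c` with the carry `c = (val a + val b) / p`, the derivative
`D_b g` is the constant `g b` minus the image of `c : ZMod p` under `k ↦ k / p`, an additive map
`ZMod p → ℝ/ℤ`. By Lagrange interpolation every function on the field `ZMod p` is a polynomial of
degree `< p`, and `D_h` lowers the degree of a polynomial, so `p` further derivatives kill `D_b g`.
-/

open Polynomial

section IteratedDerivative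

variable {V W M M' : Type*} [Add V] [Add W] [AddCommGroup M] [AddCommGroup M']

lemma foldr_D_add (hs : List V) (f g : V → M) :
    hs.foldr D (f + g) = hs.foldr D f + hs.foldr D g := by
  induction hs with
  | nil => rfl
  | cons h t ih =>
    rw [List.foldr_cons, List.foldr_cons, List.foldr_cons, ih]
    funext x
    simp only [D, Pi.add_apply]
    abel

noncomputable def iteratedD (hs : List V) : (V → M) →+ (V → M) :=
  AddMonoidHom.mk' (hs.foldr D) (foldr_D_add hs)

@[simp]
lemma iteratedD_apply (hs : List V) (f : V → M) : iteratedD hs f = hs.foldr D f := rfl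

lemma foldr_D_const {hs : List V} (hne : hs ≠ []) (c : M) : hs.foldr D (fun _ => c) = 0 := by
  obtain ⟨t, b, rfl⟩ := (List.eq_nil_or_concat' hs).resolve_left hne
  have hDc : D b (fun _ : V => c) = 0 := funext fun _ => sub_self c
  rw [List.foldr_append, List.foldr_cons, List.foldr_nil, hDc, ← iteratedD_apply, map_zero]

lemma foldr_D_addMonoidHom_comp (ψ : M →+ M') (hs : List V) (F : V → M) :
    hs.foldr D (ψ ∘ F) = ψ ∘ hs.foldr D F := by
  induction hs with
  | nil => rfl
  | cons h t ih =>
    rw [List.foldr_cons, List.foldr_cons, ih]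
    funext x
    simp [D]

lemma foldr_D_comp_addHom (π : V →ₙ+ W) (hs : List V) (g : W → M) :
    hs.foldr D (g ∘ π) = (hs.map π).foldr D g ∘ π := by
  induction hs with
  | nil => rfl
  | cons h t ih =>
    rw [List.map_cons, List.foldr_cons, List.foldr_cons, ih]
    funext x
    simp [D]

end IteratedDerivative

lemma degree_taylor_sub_lt {R : Type*} [CommRing R] {q : R[X]} (hq : q ≠ 0) (r : R) :
    (taylor r q - q).degree < q.degree :=
  degree_taylor q r ▸
    degree_sub_lt_left (degree_taylor q r) (by rwa [Ne, taylor_eq_zero]) (leadingCoeff_taylor r q)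

lemma foldr_D_eval_eq_zero {R : Type*} [CommRing R] (hs : List R) (q : R[X])
    (hq : q.degree < hs.length) : hs.foldr D (fun x => q.eval x) = 0 := by
  induction hs using List.reverseRecOn generalizing q with
  | nil =>
    have hq0 : q = 0 := degree_eq_bot.mp (by simpa [Nat.WithBot.lt_zero_iff] using hq)
    subst hq0
    exact funext fun _ => eval_zero
  | append_singleton t b ih =>
    have hDq : D b (fun x => q.eval x) = fun x => (taylor b q - q).eval x := by
      funext x
      simp [D, taylor_eval]
    rw [List.foldr_append, List.foldr_cons, List.foldr_nil, hDq]
    apply ih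
    rcases eq_or_ne q 0 with rfl | hq0
    · simp
    · rw [List.length_append, List.length_singleton, Nat.cast_withBot, ← Order.succ_eq_add_one,
        ← WithBot.succ_coe] at hq
      exact (degree_taylor_sub_lt hq0 b).trans_le (Order.le_of_lt_succ hq)

lemma foldr_D_eq_zero_of_card_le {F : Type*} [Field F] [Fintype F] (g : F → F) (hs : List F)
    (hlen : Fintype.card F ≤ hs.length) : hs.foldr D g = 0 := by
  classical
  have hinj := Set.injOn_id ((Finset.univ : Finset F) : Set F)
  have hg : g = fun x => (Lagrange.interpolate univ id g).eval x :=
    funext fun x => (Lagrange.eval_interpolate_at_node g hinj (mem_univ x)).symm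
  rw [hg]
  refine foldr_D_eval_eq_zero hs _ ((Lagrange.degree_interpolate_lt g hinj).trans_le ?_)
  exact_mod_cast hlen

noncomputable def valDivSq (p : ℕ) (a : ZMod p) : AddCircle (1 : ℝ) :=
  ((a.val : ℝ) / (p ^ 2 : ℝ) : ℝ)

lemma D_valDivSq {p : ℕ} [NeZero p] (b : ZMod p) :
    D b (valDivSq p) = (fun _ => valDivSq p b) -
      ZMod.toAddCircle ∘ fun a => (((a.val + b.val) / p : ℕ) : ZMod p) := by
  funext a
  set c := (a.val + b.val) / p
  have hval : ((a + b).val : ℝ) = a.val + b.val - p * c := by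
    rw [ZMod.val_add, eq_sub_iff_add_eq]
    exact_mod_cast Nat.mod_add_div (a.val + b.val) p
  have hp : (p : ℝ) ≠ 0 := NeZero.ne _
  simp only [D, valDivSq, Pi.sub_apply, Function.comp_apply, ZMod.toAddCircle_natCast,
    ← AddCircle.coe_sub]
  congr 1
  rw [hval]
  field_simp
  ring

lemma foldr_D_valDivSq {p : ℕ} [Fact p.Prime] (hs : List (ZMod p)) (hlen : hs.length = p + 1) :
    hs.foldr D (valDivSq p) = 0 := by
  obtain ⟨t, b, rfl⟩ := (List.eq_nil_or_concat' hs).resolve_left (by rintro rfl; simp at hlen)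
  have ht : t.length = p := by simpa using hlen
  have hne : t ≠ [] := by
    rintro rfl
    exact (Fact.out : p.Prime).ne_zero ht.symm
  rw [List.foldr_append, List.foldr_cons, List.foldr_nil, D_valDivSq, ← iteratedD_apply, map_sub,
    iteratedD_apply, iteratedD_apply, foldr_D_const hne, foldr_D_addMonoidHom_comp,
    foldr_D_eq_zero_of_card_le _ _ (by rw [ZMod.card, ht])]
  funext a
  simp

/-- `f(x) = (∑ |x_i|)/p² mod 1` is a nonclassical polynomial of degree at most `p`. -/
theorem stmt1 (p n : ℕ) [Fact p.Prime]
    (f : (Fin n → ZMod p) → AddCircle (1 : ℝ))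
    (hf : ∀ x, f x = ((((∑ i, ((x i).val : ℝ)) / (p ^ 2 : ℝ)) : ℝ) : AddCircle (1 : ℝ))) :
    IsNCPoly p f := by
  have hf_sum : f = ∑ i, valDivSq p ∘ Pi.evalAddHom (fun _ => ZMod p) i := by
    funext x
    rw [hf, Finset.sum_apply, sum_div, QuotientAddGroup.mk_sum]
    rfl
  intro hs hlen
  rw [hf_sum, ← iteratedD_apply, map_sum]
  refine sum_eq_zero fun i _ => ?_
  rw [iteratedD_apply, foldr_D_comp_addHom, foldr_D_valDivSq _ (by simp [hlen])]
  rfl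
end

section
/- Fix an odd m ≥ 3 and a ∈ {1,…,m−1}. If f : (ZMod 2)^n → ℝ/ℤ is a nonclassical polynomial of degree < d (annihilated by all d-fold derivatives), then |E_{x∈{0,1}^n}[e(f(x))·ω_m^{a(x₁+⋯+x_n)}]| ≤ exp(−c·n/4^d), where c > 0 depends only on m. -/
/-!
Van der Corput: `d` rounds of Cauchy–Schwarz remove the phase `e(f)` of a polynomial of degree
`< d`, bounding the `2^d`-th power of the correlation by an average of iterated multiplicative
derivatives of the character `χ(x) = ω^{a(x₁+⋯+xₙ)}`. As `χ` is a tensor product over the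
coordinates, this average is the `n`-th power of the same quantity on a single bit. There the
derivative in direction `1` turns `y ↦ z^y` into a unimodular multiple of `y ↦ z⁻²ʸ`, and `z⁻²`
is again a nontrivial `m`-th root of unity because `m` is odd; so each derivative halves the
gap to `1` of `‖1 + z‖ / 2 ≤ cos (π / m)`. This gives `c = 1 - cos (π / m)`.
-/

open Finset

open ComplexConjugate Real
open scoped BigOperators

lemma e_eq_toCircle (t : AddCircle (1 : ℝ)) : e t = AddCircle.toCircle t := by
  induction t using QuotientAddGroup.induction_on with
  | H t =>
    rw [AddCircle.toCircle_apply_mk, Circle.coe_exp]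
    refine (Function.Periodic.lift_coe _ t).trans ?_
    push_cast
    ring_nf

lemma e_zero : e 0 = 1 := by
  simp [e_eq_toCircle]

lemma e_sub (s t : AddCircle (1 : ℝ)) : e (s - t) = e s * conj (e t) := by
  simp only [e_eq_toCircle, sub_eq_add_neg, AddCircle.toCircle_add, AddCircle.toCircle_neg,
    Circle.coe_mul, Circle.coe_inv_eq_conj]

lemma Complex.conj_expect {ι : Type*} (s : Finset ι) (f : ι → ℂ) :
    conj (𝔼 i ∈ s, f i) = 𝔼 i ∈ s, conj (f i) := by
  simp [expect_eq_sum_div_card, map_sum]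

lemma pow_expect_le_expect_pow {ι : Type*} {s : Finset ι} (hs : s.Nonempty) {f : ι → ℝ}
    (hf : ∀ i ∈ s, 0 ≤ f i) (n : ℕ) : (𝔼 i ∈ s, f i) ^ n ≤ 𝔼 i ∈ s, f i ^ n := by
  simp only [expect_eq_sum_div_card, div_eq_inv_mul, mul_sum]
  have hw : ∑ _i ∈ s, (#s : ℝ)⁻¹ = 1 := by simp [hs.card_ne_zero]
  exact (convexOn_pow n).map_sum_le (fun _ _ => by positivity) hw hf

lemma Fintype.prod_expect {ι : Type*} {κ : ι → Type*} [Fintype ι] [DecidableEq ι]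
    [∀ i, Fintype (κ i)] {K : Type*} [Semifield K] [CharZero K] (f : ∀ i, κ i → K) :
    ∏ i, 𝔼 j, f i j = 𝔼 x : ∀ i, κ i, ∏ i, f i (x i) := by
  simp only [Fintype.expect_eq_sum_div_card, prod_div_distrib, Fintype.prod_sum,
    Fintype.card_pi, Nat.cast_prod]

noncomputable def mulDeriv {V : Type*} [Add V] (h : V) (G : V → ℂ) : V → ℂ :=
  fun x => G (x + h) * conj (G x)

lemma mulDeriv_e_comp_mul {V : Type*} [Add V] (h : V) (f : V → AddCircle (1 : ℝ)) (G : V → ℂ) :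
    mulDeriv h (fun x => e (f x) * G x) = fun x => e (D h f x) * mulDeriv h G x := by
  funext x
  simp only [mulDeriv, D, e_sub, map_mul]
  ring

section IterDerivAvg

variable {V : Type*} [AddCommGroup V] [Fintype V]

/-- Closed form: `𝔼_{h₁, …, h_d} ‖𝔼_x Δ_{h_d} ⋯ Δ_{h₁} G x‖` with `Δ = mulDeriv`. -/
noncomputable def iterDerivAvg : ℕ → (V → ℂ) → ℝ
  | 0, G => ‖𝔼 x, G x‖
  | d + 1, G => 𝔼 h, iterDerivAvg d (mulDeriv h G)

lemma iterDerivAvg_nonneg (d : ℕ) (G : V → ℂ) : 0 ≤ iterDerivAvg d G := by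
  induction d generalizing G with
  | zero => exact norm_nonneg _
  | succ d ih => exact expect_nonneg fun h _ => ih _

lemma expect_expect_mulDeriv (H : V → ℂ) :
    𝔼 h, 𝔼 x, mulDeriv h H x = (𝔼 x, H x) * conj (𝔼 x, H x) := by
  have shift : ∀ x, 𝔼 h, H (x + h) = 𝔼 y, H y := fun x =>
    Fintype.expect_equiv (Equiv.addLeft x) _ _ fun _ => rfl
  simp only [mulDeriv, Complex.conj_expect, mul_expect]
  rw [expect_comm]
  simp only [← expect_mul, shift]

lemma sq_norm_expect_le_iterDerivAvg_one (H : V → ℂ) :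
    ‖𝔼 x, H x‖ ^ 2 ≤ iterDerivAvg 1 H := by
  calc ‖𝔼 x, H x‖ ^ 2 = ‖𝔼 h, 𝔼 x, mulDeriv h H x‖ := by
        rw [expect_expect_mulDeriv, Complex.mul_conj', ← Complex.ofReal_pow, Complex.norm_real,
          Real.norm_of_nonneg (by positivity)]
    _ ≤ 𝔼 h, ‖𝔼 x, mulDeriv h H x‖ := RCLike.norm_expect_le (K := ℂ)

theorem norm_expect_e_mul_pow_le (d : ℕ) (f : V → AddCircle (1 : ℝ)) (G : V → ℂ)
    (hf : ∀ hs : List V, hs.length = d → hs.foldr D f = 0) :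
    ‖𝔼 x, e (f x) * G x‖ ^ 2 ^ d ≤ iterDerivAvg d G := by
  induction d generalizing f G with
  | zero =>
    obtain rfl : f = 0 := hf [] rfl
    simp [iterDerivAvg, e_zero]
  | succ d ih =>
    have hDf : ∀ h, ∀ hs : List V, hs.length = d → hs.foldr D (D h f) = 0 := fun h hs hlen => by
      simpa using hf (hs ++ [h]) (by simp [hlen])
    calc ‖𝔼 x, e (f x) * G x‖ ^ 2 ^ (d + 1)
        = (‖𝔼 x, e (f x) * G x‖ ^ 2) ^ 2 ^ d := by rw [pow_succ', pow_mul]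
      _ ≤ (𝔼 h, ‖𝔼 x, e (D h f x) * mulDeriv h G x‖) ^ 2 ^ d := by
        gcongr
        simpa only [iterDerivAvg, mulDeriv_e_comp_mul] using
          sq_norm_expect_le_iterDerivAvg_one fun x => e (f x) * G x
      _ ≤ 𝔼 h, ‖𝔼 x, e (D h f x) * mulDeriv h G x‖ ^ 2 ^ d :=
        pow_expect_le_expect_pow univ_nonempty (fun _ _ => norm_nonneg _) _
      _ ≤ iterDerivAvg (d + 1) G := expect_le_expect fun h _ => ih _ _ (hDf h)

end IterDerivAvg

section Product

variable {ι W : Type*} [Fintype ι]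

lemma mulDeriv_pi_prod [Add W] (g : ι → W → ℂ) (h : ι → W) :
    mulDeriv h (fun x => ∏ i, g i (x i)) = fun x => ∏ i, mulDeriv (h i) (g i) (x i) := by
  funext x
  simp only [mulDeriv, map_prod, ← prod_mul_distrib, Pi.add_apply]

variable [DecidableEq ι] [AddCommGroup W] [Fintype W]

lemma iterDerivAvg_pi_prod (d : ℕ) (g : ι → W → ℂ) :
    iterDerivAvg d (fun x : ι → W => ∏ i, g i (x i)) = ∏ i, iterDerivAvg d (g i) := by
  induction d generalizing g with
  | zero => simp only [iterDerivAvg, ← Fintype.prod_expect, norm_prod]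
  | succ d ih => simp only [iterDerivAvg, mulDeriv_pi_prod, ih, Fintype.prod_expect]

end Product

section Const

variable {V : Type*} [AddCommGroup V] [Fintype V]

lemma iterDerivAvg_one (d : ℕ) : iterDerivAvg d (fun _ : V => (1 : ℂ)) = 1 := by
  have hΔ : ∀ h : V, mulDeriv h (fun _ => (1 : ℂ)) = fun _ => 1 := fun h => by
    funext x
    simp [mulDeriv]
  induction d with
  | zero => simp [iterDerivAvg]
  | succ d ih => simp [iterDerivAvg, hΔ, ih]

lemma iterDerivAvg_const_mul {c : ℂ} (hc : ‖c‖ = 1) (d : ℕ) (G : V → ℂ) :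
    iterDerivAvg d (fun x => c * G x) = iterDerivAvg d G := by
  have hcc : c * conj c = 1 := by rw [Complex.mul_conj', hc]; norm_num
  cases d with
  | zero => simp [iterDerivAvg, ← mul_expect, hc]
  | succ d =>
    have hΔ : ∀ h, mulDeriv h (fun x => c * G x) = mulDeriv h G := fun h => by
      funext x
      simp only [mulDeriv, map_mul]
      linear_combination (G (x + h) * conj (G x)) * hcc
    simp only [iterDerivAvg, hΔ]

end Const

lemma expect_zmod_two {K : Type*} [Semifield K] [CharZero K] (f : ZMod 2 → K) :
    𝔼 y, f y = (f 0 + f 1) / 2 := by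
  rw [Fintype.expect_eq_sum_div_card, ZMod.card, show ∑ y, f y = f 0 + f 1 from Fin.sum_univ_two f]
  norm_num

noncomputable def bitPow (z : ℂ) : ZMod 2 → ℂ := fun y => z ^ y.val

lemma mulDeriv_zero_bitPow {z : ℂ} (hz : ‖z‖ = 1) : mulDeriv 0 (bitPow z) = fun _ => 1 := by
  funext y
  rw [mulDeriv, add_zero, Complex.mul_conj', bitPow, norm_pow, hz]
  norm_num

lemma mulDeriv_one_bitPow {z : ℂ} (hz : z ≠ 0) :
    mulDeriv 1 (bitPow z) = fun y => z * bitPow (conj z / z) y := by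
  funext y
  have hval : (1 : ZMod 2).val = 1 := rfl
  obtain rfl | rfl : y = 0 ∨ y = 1 := by decide +revert
  · simp [mulDeriv, bitPow, hval]
  · simp [mulDeriv, bitPow, hval, show (1 + 1 : ZMod 2) = 0 from rfl]
    field_simp

lemma iterDerivAvg_zero_bitPow (z : ℂ) : iterDerivAvg 0 (bitPow z) = ‖1 + z‖ / 2 := by
  simp [iterDerivAvg, expect_zmod_two, bitPow, show (1 : ZMod 2).val = 1 from rfl]

lemma iterDerivAvg_succ_bitPow {z : ℂ} (hz : ‖z‖ = 1) (d : ℕ) :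
    iterDerivAvg (d + 1) (bitPow z) = (1 + iterDerivAvg d (bitPow (conj z / z))) / 2 := by
  have hz0 : z ≠ 0 := norm_ne_zero_iff.mp (by rw [hz]; exact one_ne_zero)
  rw [iterDerivAvg, expect_zmod_two, mulDeriv_zero_bitPow hz, mulDeriv_one_bitPow hz0,
    iterDerivAvg_one, iterDerivAvg_const_mul hz]

lemma Complex.norm_one_add_exp_mul_I (θ : ℝ) :
    ‖1 + Complex.exp (θ * Complex.I)‖ = 2 * |Real.cos (θ / 2)| := by
  have h : 1 + Complex.exp (θ * Complex.I) =
      Complex.exp ((θ / 2 : ℝ) * Complex.I) * (2 * Complex.cos (θ / 2 : ℝ)) := by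
    rw [Complex.two_cos, mul_add, ← Complex.exp_add, ← Complex.exp_add]
    push_cast
    ring_nf
    rw [Complex.exp_zero, add_comm]
  rw [h, norm_mul, Complex.norm_exp_ofReal_mul_I, one_mul, norm_mul, ← Complex.ofReal_cos,
    Complex.norm_real, Real.norm_eq_abs]
  norm_num

lemma Real.abs_cos_le_cos {δ x : ℝ} (hδ : 0 ≤ δ) (hδx : δ ≤ x) (hxδ : x ≤ π - δ) :
    |Real.cos x| ≤ Real.cos δ := by
  rw [abs_le]
  constructor
  · rw [neg_le, ← Real.cos_pi_sub]
    exact Real.cos_le_cos_of_nonneg_of_le_pi hδ (by linarith) (by linarith)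
  · exact Real.cos_le_cos_of_nonneg_of_le_pi hδ (by linarith) hδx

lemma norm_one_add_le_cos_of_pow_eq_one {m : ℕ} (hm : m ≠ 0) {z : ℂ} (hz : z ^ m = 1)
    (hz1 : z ≠ 1) : ‖1 + z‖ / 2 ≤ cos (π / m) := by
  have : NeZero m := ⟨hm⟩
  obtain ⟨k, hkm, rfl⟩ := (Complex.isPrimitiveRoot_exp m hm).eq_pow_of_pow_eq_one hz
  have hk : 1 ≤ (k : ℝ) := by
    have : k ≠ 0 := by rintro rfl; exact hz1 (pow_zero _)
    exact_mod_cast Nat.one_le_iff_ne_zero.mpr this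
  have hkm : (k : ℝ) ≤ m - 1 := by
    have : (k : ℝ) + 1 ≤ m := by exact_mod_cast hkm
    linarith
  have hexp : Complex.exp (2 * π * Complex.I / m) ^ k =
      Complex.exp ((2 * (π / m * k) : ℝ) * Complex.I) := by
    rw [← Complex.exp_nat_mul]
    push_cast
    ring_nf
  have hπm : 0 < π / m := div_pos pi_pos (by positivity)
  rw [hexp, Complex.norm_one_add_exp_mul_I, mul_div_cancel_left₀ _ two_ne_zero,
    mul_div_cancel_left₀ _ two_ne_zero]
  refine abs_cos_le_cos hπm.le (le_mul_of_one_le_right hπm.le hk) ?_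
  calc π / m * k ≤ π / m * (m - 1) := mul_le_mul_of_nonneg_left hkm hπm.le
    _ = π - π / m := by field_simp

lemma conj_div_self_of_norm_eq_one {z : ℂ} (hz : ‖z‖ = 1) : conj z / z = (z ^ 2)⁻¹ := by
  rw [← Complex.inv_eq_conj hz]
  field_simp

lemma conj_div_self_pow_eq_one {m : ℕ} (hm : m ≠ 0) {z : ℂ} (hz : z ^ m = 1) :
    (conj z / z) ^ m = 1 := by
  rw [conj_div_self_of_norm_eq_one (Complex.norm_eq_one_of_pow_eq_one hz hm), inv_pow, ← pow_mul,
    mul_comm, pow_mul, hz, one_pow, inv_one]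

lemma conj_div_self_ne_one {m : ℕ} (hm : Odd m) {z : ℂ} (hz : z ^ m = 1) (hz1 : z ≠ 1) :
    conj z / z ≠ 1 := by
  rw [conj_div_self_of_norm_eq_one (Complex.norm_eq_one_of_pow_eq_one hz hm.pos.ne'), inv_ne_one]
  intro hz2
  obtain ⟨k, rfl⟩ := hm
  rw [pow_succ, pow_mul, hz2, one_pow, one_mul] at hz
  exact hz1 hz

lemma iterDerivAvg_bitPow_le {m : ℕ} (hm : Odd m) (d : ℕ) {z : ℂ} (hz : z ^ m = 1)
    (hz1 : z ≠ 1) : iterDerivAvg d (bitPow z) ≤ 1 - (1 - cos (π / m)) / 2 ^ d := by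
  have hm0 : m ≠ 0 := hm.pos.ne'
  induction d generalizing z with
  | zero =>
    rw [iterDerivAvg_zero_bitPow, pow_zero, div_one, sub_sub_cancel]
    exact norm_one_add_le_cos_of_pow_eq_one hm0 hz hz1
  | succ d ih =>
    rw [iterDerivAvg_succ_bitPow (Complex.norm_eq_one_of_pow_eq_one hz hm0), pow_succ, ← div_div]
    have := ih (conj_div_self_pow_eq_one hm0 hz) (conj_div_self_ne_one hm hz hz1)
    linarith

lemma norm_expect_e_mul_prod_bitPow_pow_le {n d m : ℕ} (hm : Odd m) {z : ℂ} (hz : z ^ m = 1)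
    (hz1 : z ≠ 1) (f : (Fin n → ZMod 2) → AddCircle (1 : ℝ))
    (hf : ∀ hs : List (Fin n → ZMod 2), hs.length = d → hs.foldr D f = 0) :
    ‖𝔼 x, e (f x) * ∏ i, bitPow z (x i)‖ ^ 2 ^ d ≤ (1 - (1 - cos (π / m)) / 2 ^ d) ^ n :=
  calc _ ≤ iterDerivAvg d (fun x : Fin n → ZMod 2 => ∏ i, bitPow z (x i)) :=
        norm_expect_e_mul_pow_le d f _ hf
    _ = iterDerivAvg d (bitPow z) ^ n := by
        rw [iterDerivAvg_pi_prod, prod_const, card_univ, Fintype.card_fin]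
    _ ≤ _ := pow_le_pow_left₀ (iterDerivAvg_nonneg _ _) (iterDerivAvg_bitPow_le hm d hz hz1) n

lemma cos_pi_div_mem_Ico {m : ℕ} (hm : 2 ≤ m) : cos (π / m) ∈ Set.Ico 0 1 := by
  have hm2 : (2 : ℝ) ≤ m := by exact_mod_cast hm
  have hπm : 0 < π / m := div_pos pi_pos (by linarith)
  refine ⟨cos_nonneg_of_neg_pi_div_two_le_of_le (by linarith [pi_pos])
    (div_le_div_of_nonneg_left pi_pos.le two_pos hm2), ?_⟩
  rw [← cos_zero]
  exact cos_lt_cos_of_nonneg_of_le_pi le_rfl (div_le_self pi_pos.le (by linarith)) hπm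

lemma le_exp_of_pow_le_one_sub_pow {x u : ℝ} {N n : ℕ} (hN : N ≠ 0) (hu : u ≤ N)
    (h : x ^ N ≤ (1 - u / N) ^ n) : x ≤ Real.exp (-u * n / N ^ 2) := by
  have hN' : (0 : ℝ) < N := by positivity
  refine le_of_pow_le_pow_left₀ hN (Real.exp_nonneg _) ?_
  calc x ^ N ≤ (1 - u / N) ^ n := h
    _ ≤ Real.exp (-(u / N)) ^ n :=
      pow_le_pow_left₀ (by rw [sub_nonneg, div_le_one hN']; exact hu) (one_sub_le_exp_neg _) n
    _ = Real.exp (-u * n / N ^ 2) ^ N := by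
      rw [← Real.exp_nat_mul, ← Real.exp_nat_mul]
      field_simp

theorem stmt4_general (m a : ℕ) (hm : Odd m) (ha1 : 1 ≤ a) (ham : a ≤ m - 1) :
    ∃ c : ℝ, 0 < c ∧
      ∀ (n d : ℕ) (f : (Fin n → ZMod 2) → AddCircle (1 : ℝ)),
        (∀ hs : List (Fin n → ZMod 2), hs.length = d → hs.foldr D f = 0) →
        ‖(∑ x : Fin n → ZMod 2,
              e (f x) * Complex.exp (2 * (Real.pi : ℂ) * Complex.I / (m : ℂ))
                  ^ (a * ∑ i, (x i).val)) / 2 ^ n‖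
          ≤ Real.exp (-c * n / 4 ^ d) := by
  set ω := Complex.exp (2 * π * Complex.I / m)
  have hω : IsPrimitiveRoot ω m := Complex.isPrimitiveRoot_exp m (by omega)
  have hωa : (ω ^ a) ^ m = 1 := by rw [← pow_mul, mul_comm, pow_mul, hω.pow_eq_one, one_pow]
  have hωa1 : ω ^ a ≠ 1 := hω.pow_ne_one_of_pos_of_lt (by omega) (by omega)
  obtain ⟨hρ0, hρ1⟩ := cos_pi_div_mem_Ico (by omega : 2 ≤ m)
  refine ⟨1 - cos (π / m), by linarith, fun n d f hf => ?_⟩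
  have hmean : (∑ x : Fin n → ZMod 2, e (f x) * ω ^ (a * ∑ i, (x i).val)) / 2 ^ n =
      𝔼 x, e (f x) * ∏ i, bitPow (ω ^ a) (x i) := by
    simp [Fintype.expect_eq_sum_div_card, bitPow, pow_mul, prod_pow_eq_pow_sum]
  have key := norm_expect_e_mul_prod_bitPow_pow_le hm hωa hωa1 f hf
  have h4 : (4 : ℝ) ^ d = ((2 ^ d : ℕ) : ℝ) ^ 2 := by
    push_cast
    rw [← pow_mul, mul_comm, pow_mul]
    norm_num
  rw [hmean, h4]
  refine le_exp_of_pow_le_one_sub_pow (by positivity) ?_ (by exact_mod_cast key)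
  push_cast
  linarith [one_le_pow₀ (M₀ := ℝ) one_le_two (n := d)]

/-- Extension of Viola–Wigderson to nonclassical polynomials: a nonclassical
polynomial of degree `< d` has correlation at most `exp(-c n / 4^d)` with the
sum of the bits modulo an odd `m`, where `c > 0` depends only on `m`. -/
theorem stmt4 (m a : ℕ) (hm : Odd m) (hm3 : 3 ≤ m) (ha1 : 1 ≤ a) (ham : a ≤ m - 1) :
    ∃ c : ℝ, 0 < c ∧
      ∀ (n d : ℕ) (f : (Fin n → ZMod 2) → AddCircle (1 : ℝ)),
        (∀ hs : List (Fin n → ZMod 2), hs.length = d → hs.foldr D f = 0) →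
        ‖(∑ x : Fin n → ZMod 2,
              e (f x) * Complex.exp (2 * (Real.pi : ℂ) * Complex.I / (m : ℂ))
                  ^ (a * ∑ i, (x i).val)) / 2 ^ n‖
          ≤ Real.exp (-c * n / 4 ^ d) :=
  stmt4_general m a hm ha1 ham
end

section
/- Let p be prime, k ≥ 1, and f : (ZMod p)^n → ℝ/ℤ a nonclassical polynomial of degree d whose values on {0,1}^n lie in (1/p^k)ℤ/ℤ. Let φ : (1/p^k)ℤ/ℤ → ZMod p be any function. Then there exists a classical polynomial g ∈ (ZMod p)[x₁,…,x_n] of total degree at most (p^k − 1)·d such that g(x) = φ(f(x)) for all x ∈ {0,1}^n. -/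
/-!
On the cube write `f(1_U) = F(U) / p^k` with `F(U) ∈ ℤ/p^kℤ`. The `(d+1)`-fold derivatives at `0` of `f`
along coordinate directions are the Möbius coefficients of `F` on sets of size `> d`, so they vanish
and `F(U) = ∑_{S ⊆ U, |S| ≤ d} a_S`: on the cube, `F` is the reduction of the integer polynomial
`M(x) = ∑_{|S| ≤ d} a_S x^S` of degree `d`. Newton interpolation and the congruence
`C(u + p^k, j) ≡ C(u, j) (mod p)` for `j < p^k` write every map `ℤ/p^kℤ → 𝔽_p` as an `𝔽_p`-combination
of `u ↦ C(u, j)` with `j < p^k`, and by Vandermonde's identity `C(M(x), j)` agrees on the cube with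
a polynomial of degree at most `j d`.
-/

open Finset

/-- `x` is a Boolean point: all coordinates are `0` or `1`. -/
def IsBool {n : ℕ} {R : Type*} [Zero R] [One R] (x : Fin n → R) : Prop :=
  ∀ i, x i = 0 ∨ x i = 1

def cubeVertex {ι R : Type*} [DecidableEq ι] [Zero R] [One R] (U : Finset ι) : ι → R :=
  fun i => if i ∈ U then 1 else 0

theorem isBool_cubeVertex {n : ℕ} {R : Type*} [Zero R] [One R] (U : Finset (Fin n)) :
    IsBool (cubeVertex U : Fin n → R) := fun i => by
  unfold cubeVertex; split_ifs <;> simp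

theorem IsBool.exists_eq_cubeVertex {n : ℕ} {R : Type*} [Zero R] [One R] {x : Fin n → R}
    (hx : IsBool x) : ∃ U, x = cubeVertex U := by
  classical
  refine ⟨univ.filter fun i => x i = 1, funext fun i => ?_⟩
  by_cases h1 : x i = 1
  · simp [cubeVertex, h1]
  · simpa [cubeVertex, h1] using (hx i).resolve_right h1

theorem sum_pi_single_one_eq_cubeVertex {ι R : Type*} [DecidableEq ι] [AddCommMonoidWithOne R]
    (U : Finset ι) : ∑ i ∈ U, Pi.single i (1 : R) = cubeVertex U := by
  funext j
  simp [cubeVertex, Finset.sum_apply, Pi.single_apply]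

section Differences

variable {V M : Type*} [AddCommGroup M]

theorem D_zero [Add V] (h : V) : D h (0 : V → M) = 0 :=
  funext fun _ => sub_self 0

theorem IsNCPoly.foldr_D_eq_zero [Add V] {d : ℕ} {f : V → M} (hf : IsNCPoly d f) {l : List V}
    (hl : d < l.length) : l.foldr D f = 0 := by
  induction l with
  | nil => simp at hl
  | cons h l ih =>
    rcases (Nat.lt_succ_iff.mp hl).lt_or_eq with hl | hl
    · rw [List.foldr_cons, ih hl, D_zero]
    · exact hf _ (by simp [hl])

theorem foldr_map_D_apply {α : Type*} [DecidableEq α] [AddCommMonoid V] (E : α → V) (f : V → M)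
    {l : List α} (hl : l.Nodup) (y : V) :
    (l.map E).foldr D f y =
      ∑ T ∈ l.toFinset.powerset, (-1 : ℤ) ^ (l.length - #T) • f (y + ∑ i ∈ T, E i) := by
  induction l generalizing y with
  | nil => simp
  | cons a l ih =>
    obtain ⟨ha, hl⟩ := List.nodup_cons.mp hl
    have ha' : a ∉ l.toFinset := List.mem_toFinset.not.mpr ha
    rw [List.map_cons, List.foldr_cons, D, ih hl, ih hl, List.toFinset_cons,
      sum_powerset_insert ha', List.length_cons, sub_eq_neg_add, ← sum_neg_distrib]
    congr 1 <;> refine sum_congr rfl fun T hT => ?_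
    · have hT : #T ≤ l.length := (card_le_card (mem_powerset.mp hT)).trans l.toFinset_card_le
      rw [Nat.sub_add_comm hT, pow_succ, mul_neg_one, neg_smul]
    · rw [card_insert_of_notMem fun h => ha' (mem_powerset.mp hT h), Nat.add_sub_add_right,
        sum_insert fun h => ha' (mem_powerset.mp hT h), add_assoc]

end Differences

section Moebius

variable {α M : Type*} [DecidableEq α] [AddCommGroup M]

def moebiusCoeff (F : Finset α → M) (S : Finset α) : M :=
  ∑ T ∈ S.powerset, (-1 : ℤ) ^ (#S - #T) • F T

theorem sum_Icc_neg_one_pow_card_sub {T U : Finset α} (h : T ⊆ U) :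
    ∑ S ∈ Icc T U, (-1 : ℤ) ^ (#S - #T) = if T = U then 1 else 0 := by
  have hdisj {R : Finset α} (hR : R ∈ (U \ T).powerset) : Disjoint T R :=
    disjoint_sdiff.mono_right (mem_powerset.mp hR)
  rw [Icc_eq_image_powerset h, sum_image fun R hR R' hR' hRR' => by
    rw [← union_sdiff_cancel_left (hdisj hR), ← union_sdiff_cancel_left (hdisj hR'),
      show T ∪ R = T ∪ R' from hRR']]
  rw [sum_congr rfl fun R hR => by rw [card_union_of_disjoint (hdisj hR), Nat.add_sub_cancel_left],
    sum_powerset_neg_one_pow_card]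
  exact if_congr (sdiff_eq_empty_iff_subset.trans (by simp [subset_antisymm_iff, h])) rfl rfl

theorem sum_powerset_moebiusCoeff (F : Finset α → M) (U : Finset α) :
    ∑ S ∈ U.powerset, moebiusCoeff F S = F U := by
  unfold moebiusCoeff
  rw [sum_comm' (t' := U.powerset) (s' := fun T => Icc T U) fun S T => by
    simp only [mem_powerset, mem_Icc]
    constructor
    · rintro ⟨hSU, hTS⟩; exact ⟨⟨hTS, hSU⟩, hTS.trans hSU⟩
    · rintro ⟨⟨hTS, hSU⟩, -⟩; exact ⟨hSU, hTS⟩]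
  simp_rw [← sum_smul]
  rw [sum_congr rfl fun T hT => by rw [sum_Icc_neg_one_pow_card_sub (mem_powerset.mp hT)]]
  simp [ite_smul]

theorem eq_sum_card_le_of_moebiusCoeff_eq_zero [Fintype α] {d : ℕ} {F : Finset α → M}
    (hF : ∀ S, d < #S → moebiusCoeff F S = 0) (U : Finset α) :
    F U = ∑ S with #S ≤ d, if S ⊆ U then moebiusCoeff F S else 0 := by
  rw [sum_filter_of_ne fun S _ hS => not_lt.mp fun hd => hS (by simp [hF S hd]), ← sum_filter,
    filter_subset_univ, sum_powerset_moebiusCoeff]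

end Moebius

theorem IsNCPoly.moebiusCoeff_eq_zero {ι R M : Type*} [DecidableEq ι] [AddCommMonoidWithOne R]
    [AddCommGroup M] {d : ℕ} {f : (ι → R) → M} (hf : IsNCPoly d f) {S : Finset ι}
    (hS : d < #S) : moebiusCoeff (fun T => f (cubeVertex T)) S = 0 := by
  have := foldr_map_D_apply (fun i => Pi.single i (1 : R)) f S.nodup_toList 0
  rw [hf.foldr_D_eq_zero (by simpa using hS), toList_toFinset, length_toList] at this
  simpa [moebiusCoeff, sum_pi_single_one_eq_cubeVertex] using this.symm

theorem IsNCPoly.exists_coeffs_card_le {ι R : Type*} [DecidableEq ι] [Fintype ι]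
    [AddCommMonoidWithOne R] {N : ℕ} [NeZero N] {d : ℕ} {f : (ι → R) → UnitAddCircle}
    (hf : IsNCPoly d f) {F : Finset ι → ZMod N}
    (hF : ∀ U, f (cubeVertex U) = ZMod.toAddCircle (F U)) :
    ∃ a : Finset ι → ℕ, ∀ U, F U = ((∑ S with #S ≤ d, if S ⊆ U then a S else 0 : ℕ) : ZMod N) := by
  refine ⟨fun S => (moebiusCoeff F S).val, fun U => ?_⟩
  have hF0 (S : Finset ι) (hS : d < #S) : moebiusCoeff F S = 0 := by
    rw [← ZMod.toAddCircle_eq_zero, moebiusCoeff, map_sum]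
    simp_rw [map_zsmul, ← hF]
    exact hf.moebiusCoeff_eq_zero hS
  rw [eq_sum_card_le_of_moebiusCoeff_eq_zero hF0 U]
  push_cast [Nat.cast_ite, ZMod.natCast_val, ZMod.cast_id]
  rfl

section Binomial

variable {p : ℕ} [hp : Fact p.Prime] {R : Type*} [CommRing R] [CharP R p]

theorem cast_choose_prime_pow_add (k a : ℕ) {j : ℕ} (hj : j < p ^ k) :
    ((p ^ k + a).choose j : R) = a.choose j := by
  rw [Nat.add_choose_eq, Nat.cast_sum, Finset.sum_eq_single (0, j)]
  · simp
  · rintro ⟨i, l⟩ hil hne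
    have hi : i ≠ 0 := by rintro rfl; simp_all
    have hij : i < p ^ k := by rw [HasAntidiagonal.mem_antidiagonal] at hil; omega
    rw [Nat.cast_mul, (CharP.cast_eq_zero_iff R p _).mpr (hp.out.dvd_choose_pow hi hij.ne),
      zero_mul]
  · simp

theorem cast_choose_mod_prime_pow (k a : ℕ) {j : ℕ} (hj : j < p ^ k) :
    ((a % p ^ k).choose j : R) = a.choose j :=
  Function.Periodic.map_mod_nat (f := fun a => (a.choose j : R))
    (fun a => by simpa [add_comm] using cast_choose_prime_pow_add k a hj) a

variable (p R) in
theorem exists_eq_sum_mul_choose (k : ℕ) (ψ : ZMod (p ^ k) → R) :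
    ∃ c : ℕ → R, ∀ u : ℕ, ψ u = ∑ j ∈ range (p ^ k), c j * u.choose j := by
  refine ⟨fun j => (fwdDiff 1)^[j] (fun u : ℕ => ψ u) 0, fun u => ?_⟩
  have hu : u % p ^ k < p ^ k := Nat.mod_lt _ (pow_pos hp.out.pos k)
  have := shift_eq_sum_fwdDiff_iter 1 (fun u : ℕ => ψ u) (u % p ^ k) 0
  rw [zero_add, nsmul_one, Nat.cast_id, ZMod.natCast_mod] at this
  rw [this, sum_subset (range_subset_range.mpr hu)]
  · refine sum_congr rfl fun j hj => ?_
    rw [nsmul_eq_mul, mul_comm, cast_choose_mod_prime_pow k u (mem_range.mp hj)]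
  · intro j _ hj
    rw [mem_range, not_lt] at hj
    simp [Nat.choose_eq_zero_of_lt hj]

end Binomial

section CubeDegree

open MvPolynomial

variable {ι R : Type*} [DecidableEq ι] [CommSemiring R]

variable (R) in
/-- A function on the cube `{0,1}^ι` is given by its values `F U` at the vertices `cubeVertex U`. -/
def HasCubeDegreeLE (D : ℕ) (F : Finset ι → R) : Prop :=
  ∃ G : MvPolynomial ι R, G.totalDegree ≤ D ∧ ∀ U, eval (cubeVertex U) G = F U

theorem hasCubeDegreeLE_const (c : R) : HasCubeDegreeLE R 0 fun _ : Finset ι => c :=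
  ⟨C c, (totalDegree_C c).le, fun _ => eval_C c⟩

theorem hasCubeDegreeLE_ite_subset (S : Finset ι) :
    HasCubeDegreeLE R #S fun U => if S ⊆ U then 1 else 0 := by
  refine ⟨∏ i ∈ S, X i, (totalDegree_finsetProd _ _).trans ?_, fun U => ?_⟩
  · have hX (i : ι) : (X i : MvPolynomial ι R).totalDegree ≤ 1 :=
      (totalDegree_monomial_le (Finsupp.single i 1) 1).trans_eq (by simp)
    simpa using sum_le_sum fun i (_ : i ∈ S) => hX i
  · simp only [map_prod, eval_X, cubeVertex, prod_boole]
    rfl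

namespace HasCubeDegreeLE

variable {D D' : ℕ} {F F' : Finset ι → R}

theorem mono (h : HasCubeDegreeLE R D F) (hD : D ≤ D') : HasCubeDegreeLE R D' F :=
  let ⟨G, hG, hGF⟩ := h
  ⟨G, hG.trans hD, hGF⟩

theorem congr (h : HasCubeDegreeLE R D F) (hF : ∀ U, F U = F' U) : HasCubeDegreeLE R D F' :=
  let ⟨G, hG, hGF⟩ := h
  ⟨G, hG, fun U => (hGF U).trans (hF U)⟩

theorem add (h : HasCubeDegreeLE R D F) (h' : HasCubeDegreeLE R D F') :
    HasCubeDegreeLE R D (F + F') :=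
  let ⟨G, hG, hGF⟩ := h
  let ⟨G', hG', hGF'⟩ := h'
  ⟨G + G', (totalDegree_add G G').trans (max_le hG hG'), fun U => by simp [hGF, hGF']⟩

theorem mul (h : HasCubeDegreeLE R D F) (h' : HasCubeDegreeLE R D' F') :
    HasCubeDegreeLE R (D + D') (F * F') :=
  let ⟨G, hG, hGF⟩ := h
  let ⟨G', hG', hGF'⟩ := h'
  ⟨G * G', (totalDegree_mul G G').trans (add_le_add hG hG'), fun U => by simp [hGF, hGF']⟩

theorem sum {κ : Type*} {s : Finset κ} {F : κ → Finset ι → R}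
    (h : ∀ j ∈ s, HasCubeDegreeLE R D (F j)) :
    HasCubeDegreeLE R D fun U => ∑ j ∈ s, F j U := by
  classical
  induction s using Finset.induction_on with
  | empty => simpa using (hasCubeDegreeLE_const (0 : R)).mono (Nat.zero_le D)
  | insert j s hj ih =>
    simp_rw [sum_insert hj]
    exact (h j (mem_insert_self j s)).add (ih fun i hi => h i (mem_insert_of_mem hi))

end HasCubeDegreeLE

theorem hasCubeDegreeLE_choose_ite_subset {d : ℕ} {S : Finset ι} (hS : #S ≤ d) (a i : ℕ) :
    HasCubeDegreeLE R (i * d) fun U => ((if S ⊆ U then a else 0).choose i : R) := by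
  rcases Nat.eq_zero_or_pos i with rfl | hi
  · simpa using hasCubeDegreeLE_const (1 : R)
  · refine ((hasCubeDegreeLE_const (a.choose i : R)).mul (hasCubeDegreeLE_ite_subset S)).mono
      (by nlinarith) |>.congr fun U => ?_
    by_cases hSU : S ⊆ U <;> simp [hSU, Nat.choose_eq_zero_of_lt hi]

theorem hasCubeDegreeLE_choose_sum {d : ℕ} (a : Finset ι → ℕ) {𝒮 : Finset (Finset ι)}
    (h𝒮 : ∀ S ∈ 𝒮, #S ≤ d) (j : ℕ) :
    HasCubeDegreeLE R (j * d)
      fun U => ((∑ S ∈ 𝒮, if S ⊆ U then a S else 0).choose j : R) := by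
  induction 𝒮 using Finset.induction_on generalizing j with
  | empty =>
    exact ((hasCubeDegreeLE_const ((0 : ℕ).choose j : R)).mono (Nat.zero_le _)).congr
      fun U => by simp
  | insert S 𝒮 hS ih =>
    have hrest := ih fun T hT => h𝒮 T (mem_insert_of_mem hT)
    refine (HasCubeDegreeLE.sum fun ij (hij : ij ∈ antidiagonal j) =>
      ((hasCubeDegreeLE_choose_ite_subset (h𝒮 S (mem_insert_self S 𝒮)) (a S) ij.1).mul
        (hrest ij.2)).mono ?_).congr fun U => ?_
    · rw [← add_mul, HasAntidiagonal.mem_antidiagonal.mp hij]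
    · rw [sum_insert hS, Nat.add_choose_eq]
      push_cast
      rfl

end CubeDegree

theorem stmt8_general (p n d k : ℕ) [Fact p.Prime]
    (f : (Fin n → ZMod p) → AddCircle (1 : ℝ))
    (hdeg : IsNCPoly d f)
    (hval : ∀ x : Fin n → ZMod p, IsBool x →
      ∃ m : ℤ, f x = (((m : ℝ) / (p ^ k : ℝ)) : AddCircle (1 : ℝ)))
    (φ : AddCircle (1 : ℝ) → ZMod p) :
    ∃ g : MvPolynomial (Fin n) (ZMod p),
      g.totalDegree ≤ (p ^ k - 1) * d ∧
      ∀ x : Fin n → ZMod p, IsBool x → MvPolynomial.eval x g = φ (f x) := by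
  have hF (U : Finset (Fin n)) : ∃ m : ZMod (p ^ k), f (cubeVertex U) = ZMod.toAddCircle m := by
    obtain ⟨m, hm⟩ := hval _ (isBool_cubeVertex U)
    exact ⟨m, by rw [hm, ZMod.toAddCircle_intCast]; push_cast; rfl⟩
  choose F hF using hF
  obtain ⟨a, ha⟩ := hdeg.exists_coeffs_card_le hF
  obtain ⟨c, hc⟩ := exists_eq_sum_mul_choose p (ZMod p) k fun m => φ (ZMod.toAddCircle m)
  have hM (j : ℕ) : HasCubeDegreeLE (ZMod p) (j * d)
      fun U => ((∑ S with #S ≤ d, if S ⊆ U then a S else 0).choose j : ZMod p) :=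
    hasCubeDegreeLE_choose_sum a (fun S hS => (mem_filter.mp hS).2) j
  have hφf : HasCubeDegreeLE (ZMod p) ((p ^ k - 1) * d) fun U => φ (f (cubeVertex U)) := by
    refine (HasCubeDegreeLE.sum (s := range (p ^ k)) fun j hj =>
      ((hasCubeDegreeLE_const (c j)).mul (hM j)).mono ?_).congr fun U => ?_
    · rw [zero_add]; exact Nat.mul_le_mul_right d (Nat.le_sub_one_of_lt (mem_range.mp hj))
    · rw [hF, ha, hc]; rfl
  obtain ⟨g, hg, hgU⟩ := hφf
  refine ⟨g, hg, fun x hx => ?_⟩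
  obtain ⟨U, rfl⟩ := hx.exists_eq_cubeVertex
  exact hgU U

/-- A nonclassical polynomial of degree `d` whose values on the hypercube lie
in `(1/p^k)ℤ/ℤ` can be converted, after applying any map `φ` to its values,
to a classical polynomial of degree at most `(p^k - 1)d` on `{0,1}^n`. -/
theorem stmt8 (p n d k : ℕ) [Fact p.Prime] (hk : 1 ≤ k)
    (f : (Fin n → ZMod p) → AddCircle (1 : ℝ))
    (hdeg : IsNCPoly d f)
    (hval : ∀ x : Fin n → ZMod p, IsBool x →
      ∃ m : ℤ, f x = (((m : ℝ) / (p ^ k : ℝ)) : AddCircle (1 : ℝ)))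
    (φ : AddCircle (1 : ℝ) → ZMod p) :
    ∃ g : MvPolynomial (Fin n) (ZMod p),
      g.totalDegree ≤ (p ^ k - 1) * d ∧
      ∀ x : Fin n → ZMod p, IsBool x → MvPolynomial.eval x g = φ (f x) :=
  stmt8_general p n d k f hdeg hval φ
end

section
/- Over ZMod p with p prime, for z ∈ {0,1}^t the i-th digit in base p of the integer z₁+⋯+z_t equals the elementary symmetric polynomial S_{p^i}(z) reduced mod p; i.e., if z₁+⋯+z_t = ∑_j a_j p^j with 0 ≤ a_j < p, then a_i ≡ S_{p^i}(z₁,…,z_t) (mod p). -/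
/-!
Both sides are `choose n (p ^ i)` mod `p`, where `n = z₁ + ⋯ + z_t`: a product of `0/1` entries over
`S` is `1` exactly when `S` lies in the support of `z`, so `S_{p^i}(z)` counts the `p ^ i`-subsets of
the support. Lucas' theorem `choose n (p * k) ≡ choose (n % p) 0 * choose (n / p) k` then peels
off one digit at a time until `choose (n / p ^ i) 1 = n / p ^ i`.
-/

open Finset

theorem Finset.sum_powersetCard_prod_boole {ι R : Type*} [CommSemiring R] (P : ι → Prop)
    [DecidablePred P] (u : Finset ι) (k : ℕ) :
    ∑ S ∈ u.powersetCard k, ∏ j ∈ S, (if P j then 1 else 0 : R) = ((#(u.filter P)).choose k : R) := by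
  have hsupport : (u.powersetCard k).filter (fun S => ∀ j ∈ S, P j) =
      (u.filter P).powersetCard k := by
    ext S
    simp only [mem_filter, mem_powersetCard, subset_iff, imp_and, forall_and]
    tauto
  simp_rw [prod_boole]
  rw [sum_boole, hsupport, card_powersetCard]

theorem ZMod.natCast_choose_prime_pow (p : ℕ) [Fact p.Prime] (n i : ℕ) :
    ((n.choose (p ^ i) : ℕ) : ZMod p) = (n / p ^ i % p : ℕ) := by
  induction i generalizing n with
  | zero => simp
  | succ i ih =>
    have hlucas := Choose.choose_modEq_choose_mod_mul_choose_div_nat (p := p) (n := n)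
      (k := p ^ (i + 1))
    have hp : 0 < p := (Fact.out : p.Prime).pos
    rw [pow_succ', Nat.mul_mod_right, Nat.mul_div_cancel_left _ hp, Nat.choose_zero_right,
      one_mul] at hlucas
    rw [pow_succ', (ZMod.natCast_eq_natCast_iff _ _ _).mpr hlucas, ih, Nat.div_div_eq_div_mul]

/-- For `z ∈ {0,1}^t`, the `i`-th base-`p` digit of `z₁+⋯+z_t` equals the
elementary symmetric polynomial `S_{p^i}(z)` mod `p`. -/
theorem stmt9 (p t i : ℕ) (hp : p.Prime) (z : Fin t → Bool) :
    ((((∑ j, if z j then 1 else 0) / p ^ i) % p : ℕ) : ZMod p) =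
      ∑ S ∈ Finset.powersetCard (p ^ i) (Finset.univ : Finset (Fin t)),
        ∏ j ∈ S, ((if z j then 1 else 0 : ℕ) : ZMod p) := by
  have : Fact p.Prime := ⟨hp⟩
  simp only [Nat.cast_ite, Nat.cast_one, Nat.cast_zero]
  rw [sum_powersetCard_prod_boole, ZMod.natCast_choose_prime_pow, card_filter]
end

section
/- For any prime p and n ≥ 1, let k be minimal with p^k > n and define f : (ZMod p)^n → ℝ/ℤ by f(x) = (∑_{i=1}^n |x_i|)/p^k mod 1. Then f is a nonclassical polynomial of degree 1 + (p−1)(k−1) = O(p·⌈log_p n⌉), f(0) = 0, and f(x) ≠ 0 for every x ∈ {0,1}^n with x ≠ 0; i.e., f weakly represents the OR function. -/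
open Finset

section Ops
variable {p : ℕ} [Fact p.Prime]

noncomputable def shiftE (p : ℕ) : Module.End ℤ (ZMod p → ℤ) where
  toFun u := fun x => u (x + 1)
  map_add' := by intros; rfl
  map_smul' := by intros; rfl

noncomputable def dE (p : ℕ) : Module.End ℤ (ZMod p → ℤ) := shiftE p - 1

lemma shiftE_pow (j : ℕ) (u : ZMod p → ℤ) (x : ZMod p) :
    ((shiftE p) ^ j) u x = u (x + (j : ZMod p)) := by
  induction j generalizing u with
  | zero => simp
  | succ m ih =>
    rw [pow_succ, Module.End.mul_apply, ih (shiftE p u)]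
    show u (x + (m : ZMod p) + 1) = _
    congr 1
    push_cast
    ring

lemma shiftE_pow_p : (shiftE p) ^ p = 1 := by
  refine LinearMap.ext fun u => funext fun x => ?_
  rw [shiftE_pow]
  simp

lemma keyop : ∃ B : Module.End ℤ (ZMod p → ℤ), (dE p) ^ p = (p : ℤ) • ((dE p) * B) := by
  have hp := (Fact.out : p.Prime)
  refine ⟨∑ m ∈ range (p - 1), (-(p.choose (m+1) / p : ℤ)) • (dE p) ^ m, ?_⟩
  have hs : shiftE p = dE p + 1 := by rw [dE]; abel
  have h1 : (1 : Module.End ℤ (ZMod p → ℤ)) =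
      ∑ m ∈ range (p + 1), (dE p) ^ m * 1 ^ (p - m) * (p.choose m : Module.End ℤ (ZMod p → ℤ)) := by
    rw [← Commute.add_pow (Commute.one_right (dE p)) p, ← hs, shiftE_pow_p]
  simp only [one_pow, mul_one] at h1
  have hp1 : p = (p - 1) + 1 := (Nat.succ_pred_eq_of_pos hp.pos).symm
  rw [sum_range_succ] at h1
  rw [hp1, sum_range_succ'] at h1
  rw [← hp1] at h1
  simp only [Nat.choose_self, Nat.cast_one, mul_one, pow_zero, Nat.choose_zero_right, one_mul] at h1
  have h2 : (dE p) ^ p = -∑ m ∈ range (p - 1), (dE p) ^ (m+1) * (p.choose (m+1) : Module.End ℤ (ZMod p → ℤ)) := by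
    rw [eq_comm, ← sub_eq_zero] at h1
    rw [← sub_eq_zero, ← h1]
    abel
  rw [h2, Finset.mul_sum, Finset.smul_sum, ← Finset.sum_neg_distrib]
  apply Finset.sum_congr rfl
  intro m hm
  simp only [Finset.mem_range] at hm
  have hdvd : p ∣ p.choose (m+1) := hp.dvd_choose_self (Nat.succ_ne_zero m) (by omega)
  have hc : (p : ℤ) * ((p.choose (m+1) : ℤ) / p) = (p.choose (m+1) : ℤ) := by
    rw [Int.mul_ediv_cancel']
    exact_mod_cast hdvd
  rw [mul_smul_comm, smul_smul, mul_neg, hc]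
  rw [← pow_succ']
  rw [← (Nat.cast_commute (p.choose (m+1)) ((dE p)^(m+1))).eq, ← nsmul_eq_mul, neg_smul, natCast_zsmul]

lemma div_lemma : ∀ (m : ℕ) (u : ZMod p → ℤ), ∃ v,
    ((dE p) ^ ((p-1)*m + 1)) u = ((p:ℤ)^m) • ((dE p) v) := by
  intro m
  induction m with
  | zero => intro u; exact ⟨u, by simp⟩
  | succ m ih =>
    intro u
    obtain ⟨v, hv⟩ := ih u
    obtain ⟨B, hB⟩ := keyop (p := p)
    refine ⟨B v, ?_⟩
    have hexp : (p-1)*(m+1) + 1 = (p-1) + ((p-1)*m + 1) := by rw [Nat.mul_succ]; omega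
    rw [hexp, pow_add, Module.End.mul_apply, hv, map_smul]
    have h2 : ((dE p) ^ (p-1)) ((dE p) v) = ((dE p) ^ p) v := by
      have hpe : (p - 1) + 1 = p := Nat.succ_pred_eq_of_pos (Fact.out : p.Prime).pos
      rw [← Module.End.mul_apply, ← pow_succ, hpe]
    rw [h2, hB, LinearMap.smul_apply, Module.End.mul_apply, smul_smul]
    rw [pow_succ]

lemma dE_apply (u : ZMod p → ℤ) : dE p u = D (1 : ZMod p) u := by
  funext x
  show (shiftE p u - u) x = _
  rfl

lemma dE_pow_apply (n : ℕ) (u : ZMod p → ℤ) : ((dE p) ^ n) u = (D (1 : ZMod p))^[n] u := by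
  induction n generalizing u with
  | zero => rfl
  | succ m ih =>
    rw [pow_succ', Module.End.mul_apply, Function.iterate_succ_apply', ← ih u, ← dE_apply]

variable {M : Type*} [AddCommGroup M]

lemma D_natCast (c : ℕ) (g : ZMod p → M) :
    D ((c : ZMod p)) g = fun x => ∑ j ∈ range c, D (1 : ZMod p) g (x + (j : ZMod p)) := by
  induction c with
  | zero => funext x; simp [D]
  | succ m ih =>
    funext x
    rw [sum_range_succ, ← congrFun ih x]
    show g (x + ((m + 1 : ℕ) : ZMod p)) - g x
        = (g (x + (m : ZMod p)) - g x) + (g (x + (m : ZMod p) + 1) - g (x + (m : ZMod p)))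
    push_cast
    rw [show x + ((m : ZMod p) + 1) = x + (m : ZMod p) + 1 by ring]
    abel

lemma D_one_sum_shift (c : ℕ) (u : ZMod p → M) :
    D (1 : ZMod p) (fun x => ∑ j ∈ range c, u (x + (j : ZMod p)))
      = fun x => ∑ j ∈ range c, D (1 : ZMod p) u (x + (j : ZMod p)) := by
  funext x
  simp only [D, ← Finset.sum_sub_distrib]
  apply Finset.sum_congr rfl
  intro j _
  rw [show x + 1 + (j : ZMod p) = x + (j : ZMod p) + 1 by ring]

lemma D_iter_sum_shift (m c : ℕ) (u : ZMod p → M) :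
    (D (1 : ZMod p))^[m] (fun x => ∑ j ∈ range c, u (x + (j : ZMod p)))
      = fun x => ∑ j ∈ range c, ((D (1 : ZMod p))^[m] u) (x + (j : ZMod p)) := by
  induction m generalizing u with
  | zero => rfl
  | succ t ih =>
    rw [Function.iterate_succ_apply, D_one_sum_shift, ih, Function.iterate_succ_apply]

lemma isNCPoly_of_forall {V : Type*} [Add V] {d : ℕ} {g : V → M}
    (H : ∀ h : V, IsNCPoly d (D h g)) : IsNCPoly (d+1) g := by
  intro hs hlen
  rcases List.eq_nil_or_concat hs with rfl | ⟨t, h, rfl⟩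
  · simp at hlen
  · rw [List.concat_eq_append, List.foldr_append]
    exact H h t (by simpa using hlen)

lemma gen : ∀ (d : ℕ) (g : ZMod p → M), (D (1:ZMod p))^[d+1] g = 0 → IsNCPoly d g := by
  intro d
  induction d with
  | zero =>
    intro g H hs hlen
    obtain ⟨h, rfl⟩ := List.length_eq_one_iff.mp hlen
    show D h g = 0
    have hD1 : D (1 : ZMod p) g = 0 := by simpa using H
    have hcast : ((h.val : ℕ) : ZMod p) = h := by
      have := ZMod.natCast_val (R := ZMod p) h
      rwa [ZMod.cast_id] at this
    rw [← hcast, D_natCast, hD1]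
    funext x; simp
  | succ d IH =>
    intro g H
    apply isNCPoly_of_forall
    intro h
    apply IH
    have hcast : ((h.val : ℕ) : ZMod p) = h := by
      have := ZMod.natCast_val (R := ZMod p) h
      rwa [ZMod.cast_id] at this
    rw [← hcast, D_natCast, D_iter_sum_shift]
    have hz : (D (1 : ZMod p))^[d+1] (D 1 g) = 0 := by
      rw [← Function.iterate_succ_apply]; exact H
    rw [hz]
    funext x; simp

lemma intcoe_zero (z : ℤ) : ((z : ℝ) : AddCircle (1:ℝ)) = 0 := by
  rw [AddCircle.coe_eq_zero_iff]; exact ⟨z, by simp⟩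

lemma D_int_div (c : ℝ) (h : ZMod p) (w : ZMod p → ℤ) :
    D h (fun a => (((w a : ℝ) / c : ℝ) : AddCircle (1:ℝ)))
      = fun a => ((((D h w a : ℤ) : ℝ) / c : ℝ) : AddCircle (1:ℝ)) := by
  funext a
  show ((((w (a+h) : ℝ) / c - (w a : ℝ) / c : ℝ)) : AddCircle (1:ℝ)) = _
  congr 1
  show (w (a+h) : ℝ) / c - (w a : ℝ) / c = ((w (a+h) - w a : ℤ) : ℝ) / c
  push_cast
  ring

lemma D_iter_int_div (m : ℕ) (c : ℝ) (w : ZMod p → ℤ) :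
    (D (1 : ZMod p))^[m] (fun a => (((w a : ℝ) / c : ℝ) : AddCircle (1:ℝ)))
      = fun a => (((((D (1:ZMod p))^[m] w a : ℤ) : ℝ) / c : ℝ) : AddCircle (1:ℝ)) := by
  induction m generalizing w with
  | zero => rfl
  | succ t ih => rw [Function.iterate_succ_apply, D_int_div, ih, Function.iterate_succ_apply]

lemma foldr_sum {n : ℕ} (g : Fin n → ZMod p → M) (hs : List (Fin n → ZMod p)) :
    hs.foldr D (fun x => ∑ i, g i (x i))
      = fun x => ∑ i, ((hs.map (fun h => h i)).foldr D (g i)) (x i) := by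
  induction hs with
  | nil => rfl
  | cons h t ih =>
    show D h (t.foldr D _) = _
    rw [ih]
    funext x
    show (∑ i, _) - (∑ i, _) = _
    rw [← Finset.sum_sub_distrib]
    rfl

lemma single_var (k : ℕ) (hk1 : 1 ≤ k) :
    (D (1:ZMod p))^[(p-1)*(k-1)+2]
      (fun a : ZMod p => (((a.val : ℝ) / (p:ℝ)^k : ℝ) : AddCircle (1:ℝ))) = 0 := by
  have hp := (Fact.out : p.Prime)
  set w : ZMod p → ℤ := fun a => ((a+1).val : ℤ) - (a.val : ℤ) with hwdef
  set χ : ZMod p → ℤ := fun a => if a.val = p - 1 then 1 else 0 with hχdef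
  have hw : w = (fun _ => (1:ℤ)) - (p:ℤ) • χ := by
    funext a
    have hval : (a + 1).val = (a.val + 1) % p := by
      rw [ZMod.val_add, ZMod.val_one]
    have halt : a.val < p := ZMod.val_lt a
    simp only [hwdef, hχdef, Pi.sub_apply, Pi.smul_apply, smul_eq_mul]
    by_cases hcase : a.val = p - 1
    · rw [hval, hcase, if_pos rfl]
      have : (p - 1 + 1) % p = 0 := by
        rw [Nat.sub_add_cancel hp.one_le, Nat.mod_self]
      rw [this]
      push_cast
      omega
    · rw [hval, if_neg hcase]
      have : (a.val + 1) % p = a.val + 1 := Nat.mod_eq_of_lt (by omega)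
      rw [this]
      push_cast
      ring
  obtain ⟨v, hv⟩ := div_lemma (p := p) (k-1) χ
  have hconst : dE p (fun _ => (1:ℤ)) = 0 := by
    rw [dE, LinearMap.sub_apply]
    funext x
    simp [shiftE]
  have hN : ((dE p)^((p-1)*(k-1)+1)) w = (-((p:ℤ)^k)) • dE p v := by
    rw [hw, map_sub, map_smul, hv]
    have h0 : ((dE p)^((p-1)*(k-1)+1)) (fun _ => (1:ℤ)) = 0 := by
      rw [pow_succ, Module.End.mul_apply, hconst, map_zero]
    rw [h0, zero_sub, smul_smul, ← neg_smul]
    congr 1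
    rw [← pow_succ', show k - 1 + 1 = k from by omega]
  have hD1g : D (1:ZMod p) (fun a : ZMod p => (((a.val : ℝ) / (p:ℝ)^k : ℝ) : AddCircle (1:ℝ)))
      = fun a => ((((w a : ℤ) : ℝ) / (p:ℝ)^k : ℝ) : AddCircle (1:ℝ)) := by
    funext a
    show ((((a+1).val : ℝ) / (p:ℝ)^k - (a.val : ℝ) / (p:ℝ)^k : ℝ) : AddCircle (1:ℝ)) = _
    congr 1
    simp only [hwdef]
    push_cast
    ring
  rw [show (p-1)*(k-1)+2 = ((p-1)*(k-1)+1)+1 by omega, Function.iterate_succ_apply, hD1g,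
    D_iter_int_div, ← dE_pow_apply, hN]
  funext a
  have hpk : ((p:ℝ))^k ≠ 0 := by
    have hp0 : (0:ℝ) < p := by exact_mod_cast hp.pos
    positivity
  have : ((((-((p:ℤ)^k)) • dE p v) a : ℤ) : ℝ) / (p:ℝ)^k = ((-(dE p v a) : ℤ) : ℝ) := by
    simp only [Pi.smul_apply, smul_eq_mul]
    push_cast
    field_simp
  rw [this, intcoe_zero]
  rfl

end Ops

/-- `f(x) = (∑|x_i|)/p^k mod 1`, with `k` minimal such that `p^k > n`, is a
nonclassical polynomial of degree `1 + (p-1)(k-1)` which weakly represents OR. -/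
theorem stmt12 (p n k : ℕ) [Fact p.Prime] (hn : 1 ≤ n)
    (hk : n < p ^ k) (hk' : p ^ (k - 1) ≤ n)
    (f : (Fin n → ZMod p) → AddCircle (1 : ℝ))
    (hf : ∀ x, f x = ((((∑ i, ((x i).val : ℝ)) / p ^ k : ℝ)) : AddCircle (1 : ℝ))) :
    IsNCPoly (1 + (p - 1) * (k - 1)) f ∧
    f 0 = 0 ∧
    ∀ x : Fin n → ZMod p, IsBool x → x ≠ 0 → f x ≠ 0 := by
  have hp := (Fact.out : p.Prime)
  have hk1 : 1 ≤ k := by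
    rcases Nat.eq_zero_or_pos k with rfl | h
    · simp at hk; omega
    · exact h
  refine ⟨?_, ?_, ?_⟩
  · -- nonclassical polynomial
    set g : ZMod p → AddCircle (1:ℝ) :=
      fun a => (((a.val : ℝ) / (p:ℝ)^k : ℝ) : AddCircle (1:ℝ)) with hg
    have hfg : f = fun x => ∑ i, g (x i) := by
      funext x
      rw [hf x, Finset.sum_div]
      exact map_sum (QuotientAddGroup.mk' (AddSubgroup.zmultiples (1:ℝ)))
        (fun i => ((x i).val : ℝ) / (p:ℝ)^k) Finset.univ
    have hsingle : IsNCPoly (1 + (p - 1) * (k - 1)) g := by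
      apply gen
      rw [show (1 + (p - 1) * (k - 1)) + 1 = (p-1)*(k-1) + 2 from by omega]
      exact single_var k hk1
    intro hs hlen
    rw [hfg, foldr_sum]
    funext x
    apply Finset.sum_eq_zero
    intro i _
    rw [hsingle (hs.map (fun h => h i)) (by simp [hlen])]
    rfl
  · rw [hf 0]
    have : ∀ i : Fin n, (((0 : Fin n → ZMod p) i).val : ℝ) = 0 := by
      intro i; simp
    rw [Finset.sum_congr rfl (fun i _ => this i)]
    simp
  · intro x hbool hx0 hcontra
    rw [hf x] at hcontra
    set S : ℝ := ∑ i, ((x i).val : ℝ) with hS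
    obtain ⟨i0, hi0⟩ := Function.ne_iff.mp hx0
    have hxi0 : x i0 = 1 := by rcases hbool i0 with h | h
                               · exact absurd h hi0
                               · exact h
    have hval1 : ((x i0).val : ℝ) = 1 := by
      rw [hxi0, ZMod.val_one]
      norm_num
    have hS1 : 1 ≤ S := by
      rw [hS, ← hval1]
      apply Finset.single_le_sum (f := fun i => ((x i).val : ℝ))
      · intro i _; positivity
      · exact Finset.mem_univ i0
    have hS2 : S ≤ n := by
      rw [hS]
      calc ∑ i, ((x i).val : ℝ) ≤ ∑ _i : Fin n, (1:ℝ) := by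
            apply Finset.sum_le_sum
            intro i _
            rcases hbool i with h | h
            · simp [h]
            · rw [h, ZMod.val_one]; norm_num
        _ = n := by simp
    have hpk : (0:ℝ) < (p:ℝ)^k := by
      have : (0:ℝ) < p := by exact_mod_cast hp.pos
      positivity
    have hnpk : (n:ℝ) < (p:ℝ)^k := by
      rw [show ((p:ℝ))^k = ((p^k : ℕ) : ℝ) from by push_cast; ring]
      exact_mod_cast hk
    obtain ⟨z, hz⟩ := (AddCircle.coe_eq_zero_iff (1:ℝ)).mp hcontra
    rw [zsmul_eq_mul, mul_one] at hz
    have h1 : (0:ℝ) < z := by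
      rw [hz]
      positivity
    have h2 : (z:ℝ) < 1 := by
      rw [hz, div_lt_one hpk]
      linarith
    have : (0:ℤ) < z := by exact_mod_cast h1
    have : z < 1 := by exact_mod_cast h2
    omega
end

section
/- Let p be prime and f : (ZMod p)^n → ℝ/ℤ a nonclassical polynomial of degree d with values on {0,1}^n in (1/p^k)ℤ/ℤ, such that f(0^n) = 0. If n > (p^k − 1)·d, then there exists a nonzero x ∈ {0,1}^n with f(x) = 0. -/
/-!
Read a function on the cube `{0,1}^n` as a function of the support `S` of a point. The values
of `f` are `G S / p^k` with `G S ∈ ℤ/p^k`, and `deg f ≤ d` kills the Möbius coefficients of `G`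
above level `d`; hence `G S ≡ c S := ∑_{T ⊆ S} ℓ T` for naturals `ℓ T` supported on `#T ≤ d`.
By Lucas, the `j`-th base-`p` digit of `c S` is `(c S).choose (p^j)` mod `p`, a function of degree
`≤ p^j d`, so by Fermat the indicator `∏_{j<k} (1 - digit_j^(p-1))` of the roots of `f` has degree
`≤ (p^k - 1) d < n`. If `0` were the only Boolean root, this indicator would be `1 - OR`, whose top
Möbius coefficient is `±1`, while that coefficient vanishes for every function of degree `< n`.
-/

open Finset

lemma Nat.pow_dvd_iff_forall_dvd_div_pow {p : ℕ} (c k : ℕ) :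
    p ^ k ∣ c ↔ ∀ j < k, p ∣ c / p ^ j := by
  induction k with
  | zero => simp
  | succ k ih =>
    rw [Nat.forall_lt_succ_right, ← ih]
    constructor
    · intro h
      have hk : p ^ k ∣ c := (pow_dvd_pow p k.le_succ).trans h
      exact ⟨hk, (Nat.dvd_div_iff_mul_dvd hk).mpr (by rwa [← pow_succ])⟩
    · rintro ⟨hk, hdigit⟩
      rw [pow_succ, ← Nat.dvd_div_iff_mul_dvd hk]
      exact hdigit

lemma Nat.sum_range_pred_mul_pow_mul {p : ℕ} (hp : 1 ≤ p) (k d : ℕ) :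
    ∑ j ∈ range k, (p - 1) * (p ^ j * d) = (p ^ k - 1) * d := by
  rw [← geom_sum_mul_of_one_le hp, sum_mul, sum_mul]
  exact sum_congr rfl fun j _ => by ring

section Digits

variable {p : ℕ} [hp : Fact p.Prime]

/-- Lucas' theorem for the binomial coefficient at `p ^ j`: it reads off the `j`-th digit of `c`. -/
lemma ZMod.natCast_choose_prime_pow_s13 (c j : ℕ) : (c.choose (p ^ j) : ZMod p) = (c / p ^ j : ℕ) := by
  induction j generalizing c with
  | zero => simp
  | succ j ih =>
    have hlucas := (ZMod.intCast_eq_intCast_iff _ _ p).mpr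
      (Choose.choose_modEq_choose_mod_mul_choose_div (n := c) (k := p ^ (j + 1)))
    push_cast at hlucas
    rw [hlucas, pow_succ, Nat.mul_mod_left, Nat.mul_div_cancel _ hp.out.pos, Nat.choose_zero_right,
      Nat.cast_one, one_mul, ih, Nat.div_div_eq_div_mul, mul_comm]

/-- By Fermat, `1 - x ^ (p - 1)` is the indicator of `x = 0` on `ZMod p`. -/
lemma ZMod.prod_one_sub_digit_pow_eq_ite (c k : ℕ) :
    ∏ j ∈ range k, (1 - ((c / p ^ j : ℕ) : ZMod p) ^ (p - 1)) = if p ^ k ∣ c then 1 else 0 := by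
  have hdigit : ∀ j, 1 - ((c / p ^ j : ℕ) : ZMod p) ^ (p - 1) = if p ∣ c / p ^ j then 1 else 0 := by
    intro j
    split_ifs with h
    · rw [(ZMod.natCast_eq_zero_iff _ p).mpr h, zero_pow (Nat.sub_ne_zero_of_lt hp.out.one_lt),
        sub_zero]
    · rw [ZMod.pow_card_sub_one_eq_one ((ZMod.natCast_eq_zero_iff _ p).not.mpr h), sub_self]
  simp only [hdigit, prod_ite_zero, prod_const_one, mem_range, Nat.pow_dvd_iff_forall_dvd_div_pow]

end Digits

lemma IsNCPoly.mono {V M : Type*} [Add V] [AddCommGroup M] {d e : ℕ} {f : V → M}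
    (hf : IsNCPoly d f) (hde : d ≤ e) : IsNCPoly e f := by
  induction e, hde using Nat.le_induction with
  | base => exact hf
  | succ e _ ih =>
    rintro (_ | ⟨h, hs⟩) hlen
    · simp at hlen
    · rw [List.foldr_cons, ih hs (by simpa using hlen)]
      funext x
      simp [D]

namespace BoolCube

section Mobius

variable {α M : Type*} [AddCommGroup M]

def mobius (G : Finset α → M) (T : Finset α) : M :=
  ∑ U ∈ T.powerset, (-1 : ℤ) ^ (#T - #U) • G U

lemma map_mobius {N : Type*} [AddCommGroup N] (φ : M →+ N) (G : Finset α → M) (T : Finset α) :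
    φ (mobius G T) = mobius (φ ∘ G) T := by
  simp only [mobius, map_sum, map_zsmul, Function.comp_apply]

lemma mobius_congr {G G' : Finset α → M} {T : Finset α} (h : ∀ U ⊆ T, G U = G' U) :
    mobius G T = mobius G' T :=
  sum_congr rfl fun U hU => by rw [h U (mem_powerset.mp hU)]

variable [DecidableEq α]

lemma mobius_insert (G : Finset α → M) {a : α} {T : Finset α} (ha : a ∉ T) :
    mobius G (insert a T) = mobius (fun U => G (insert a U) - G U) T := by
  have hcard : ∀ U ∈ T.powerset, #U ≤ #T ∧ a ∉ U := fun U hU =>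
    ⟨card_le_card (mem_powerset.mp hU), fun h => ha (mem_powerset.mp hU h)⟩
  simp only [mobius, sum_powerset_insert ha, smul_sub, sum_sub_distrib, card_insert_of_notMem ha]
  rw [add_comm, sub_eq_add_neg]
  congr 1
  · refine sum_congr rfl fun U hU => ?_
    rw [card_insert_of_notMem (hcard U hU).2, Nat.succ_sub_succ]
  · rw [← sum_neg_distrib]
    refine sum_congr rfl fun U hU => ?_
    rw [Nat.succ_sub (hcard U hU).1, pow_succ, mul_neg_one, neg_smul]

theorem sum_powerset_mobius (G : Finset α → M) (S : Finset α) :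
    ∑ T ∈ S.powerset, mobius G T = G S := by
  induction S using Finset.induction_on generalizing G with
  | empty => simp [mobius]
  | insert a S ha ih =>
    have hinsert : ∀ T ∈ S.powerset,
        mobius G (insert a T) = mobius (fun U => G (insert a U) - G U) T :=
      fun T hT => mobius_insert G fun h => ha (mem_powerset.mp hT h)
    rw [sum_powerset_insert ha, sum_congr rfl hinsert, ih, ih]
    abel

end Mobius

/-- The Möbius coefficient at `T` of `g` on the cube spanned by `v` is the iterated derivative of
`g` at `0` along the `v i`, `i ∈ T`; so it vanishes as soon as all `#T`-fold derivatives do. -/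
lemma mobius_comp_sum_eq_zero {α V M : Type*} [DecidableEq α] [AddCommGroup V] [AddCommGroup M]
    (v : α → V) (T : Finset α) (g : V → M)
    (hg : ∀ hs : List V, hs.length = #T → hs.foldr D g = 0) :
    mobius (fun U => g (∑ i ∈ U, v i)) T = 0 := by
  induction T using Finset.induction_on generalizing g with
  | empty => simp [mobius, show g = 0 from hg [] rfl]
  | insert a T ha ih =>
    rw [mobius_insert _ ha]
    have hstep : ∀ U ⊆ T,
        g (∑ i ∈ insert a U, v i) - g (∑ i ∈ U, v i) = D (v a) g (∑ i ∈ U, v i) := by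
      intro U hU
      rw [sum_insert fun h => ha (hU h), add_comm]
      rfl
    rw [mobius_congr hstep]
    refine ih _ fun hs hlen => ?_
    simpa using hg (hs ++ [v a]) (by simp [hlen, card_insert_of_notMem ha])

section Degree

variable {α : Type*} [DecidableEq α] (R : Type*) [CommRing R]

/-- A function on the cube `{0,1}^α` is read as a function of the support `U` of a point;
`monomial R T` is then the monomial `∏ i ∈ T, x i`. -/
def monomial (T : Finset α) : Finset α → R := fun U => if T ⊆ U then 1 else 0

def degreeLE (D : ℕ) : Submodule R (Finset α → R) :=
  Submodule.span R (monomial R '' {T | #T ≤ D})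

variable {R}

lemma monomial_mem_degreeLE {T : Finset α} {D : ℕ} (h : #T ≤ D) : monomial R T ∈ degreeLE R D :=
  Submodule.subset_span ⟨T, h, rfl⟩

lemma one_mem_degreeLE (D : ℕ) : (1 : Finset α → R) ∈ degreeLE R D := by
  convert monomial_mem_degreeLE (R := R) (T := ∅) (Nat.zero_le D)
  funext U
  simp [monomial]

lemma monomial_mul_monomial (T T' : Finset α) :
    monomial R T * monomial R T' = monomial R (T ∪ T') := by
  funext U
  by_cases h : T ⊆ U <;> by_cases h' : T' ⊆ U <;> simp [monomial, h, h', union_subset_iff]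

lemma degreeLE_mul_le (D E : ℕ) :
    degreeLE R D * degreeLE R E ≤ (degreeLE R (D + E) : Submodule R (Finset α → R)) := by
  rw [degreeLE, degreeLE, Submodule.span_mul_span]
  refine Submodule.span_mono ?_
  rintro _ ⟨_, ⟨T, hT, rfl⟩, _, ⟨T', hT', rfl⟩, rfl⟩
  exact ⟨T ∪ T', (card_union_le T T').trans (add_le_add hT hT'), (monomial_mul_monomial T T').symm⟩

lemma mul_mem_degreeLE {D E : ℕ} {g h : Finset α → R} (hg : g ∈ degreeLE R D)
    (hh : h ∈ degreeLE R E) : g * h ∈ degreeLE R (D + E) :=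
  degreeLE_mul_le D E (Submodule.mul_mem_mul hg hh)

lemma pow_mem_degreeLE {D : ℕ} {g : Finset α → R} (hg : g ∈ degreeLE R D) (m : ℕ) :
    g ^ m ∈ degreeLE R (m * D) := by
  induction m with
  | zero => simpa using one_mem_degreeLE 0
  | succ m ih => simpa [pow_succ, add_mul] using mul_mem_degreeLE ih hg

lemma prod_mem_degreeLE {ι : Type*} (s : Finset ι) (g : ι → Finset α → R) (D : ι → ℕ)
    (hg : ∀ i ∈ s, g i ∈ degreeLE R (D i)) : ∏ i ∈ s, g i ∈ degreeLE R (∑ i ∈ s, D i) := by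
  classical
  induction s using Finset.induction_on with
  | empty => simpa using one_mem_degreeLE 0
  | insert a s ha ih =>
    rw [prod_insert ha, sum_insert ha]
    exact mul_mem_degreeLE (hg a (mem_insert_self a s))
      (ih fun i hi => hg i (mem_insert_of_mem hi))

lemma mobius_monomial_eq_zero {S T : Finset α} (h : ¬ S ⊆ T) :
    mobius (monomial R T) S = 0 := by
  obtain ⟨a, haS, haT⟩ := not_subset.mp h
  have hconst : ∀ U ⊆ S.erase a, monomial R T (insert a U) - monomial R T U = 0 := by
    intro U _
    simp [monomial, subset_insert_iff_of_notMem haT]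
  rw [← insert_erase haS, mobius_insert _ (notMem_erase a S), mobius_congr hconst]
  simp [mobius]

lemma mobius_eq_zero_of_mem_degreeLE {S : Finset α} {D : ℕ} (hD : D < #S) {G : Finset α → R}
    (hG : G ∈ degreeLE R D) : mobius G S = 0 := by
  induction hG using Submodule.span_induction with
  | mem _ hT =>
    obtain ⟨T, hT, rfl⟩ := hT
    exact mobius_monomial_eq_zero fun hST => (card_le_card hST).not_gt (hT.trans_lt hD)
  | zero => simp [mobius]
  | add G G' _ _ hG hG' => simpa [mobius, smul_add, sum_add_distrib] using congr_arg₂ (· + ·) hG hG'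
  | smul r G _ hG => simpa [mobius, mul_sum, mul_left_comm r] using congr_arg (r * ·) hG

/-- `Pi.single ∅ 1` is `1 - OR`: the degree lower bound for the OR function. -/
theorem pi_single_empty_notMem_degreeLE [Fintype α] [Nontrivial R] {D : ℕ}
    (hD : D < Fintype.card α) : Pi.single (∅ : Finset α) (1 : R) ∉ degreeLE R D := by
  intro hmem
  have hzero := mobius_eq_zero_of_mem_degreeLE (S := univ) (by simpa using hD) hmem
  rw [mobius, sum_eq_single_of_mem ∅ (empty_mem_powerset _)
    fun U _ hU => by simp [hU]] at hzero
  simp only [Pi.single_eq_same, card_empty, Nat.sub_zero, zsmul_eq_mul, Int.cast_pow, Int.cast_neg,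
    Int.cast_one, mul_one] at hzero
  exact (isUnit_neg_one.pow _).ne_zero hzero

end Degree

section Binomial

variable {α : Type*} [DecidableEq α] (R : Type*) [CommRing R]

def BinomialDegreeLE (a : Finset α → ℕ) (d : ℕ) : Prop :=
  ∀ N, (fun S => ((a S).choose N : R)) ∈ degreeLE R (N * d)

variable {R}

lemma binomialDegreeLE_zero (d : ℕ) : BinomialDegreeLE R (0 : Finset α → ℕ) d := by
  rintro (_ | N)
  · simpa [Pi.one_def] using one_mem_degreeLE 0
  · simpa [Pi.zero_def] using (degreeLE R _).zero_mem

lemma BinomialDegreeLE.add {a b : Finset α → ℕ} {d : ℕ} (ha : BinomialDegreeLE R a d)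
    (hb : BinomialDegreeLE R b d) : BinomialDegreeLE R (a + b) d := by
  intro N
  have hvandermonde : (fun S => (((a + b) S).choose N : R)) = ∑ ij ∈ antidiagonal N,
      ((fun S => ((a S).choose ij.1 : R)) * fun S => ((b S).choose ij.2 : R)) := by
    funext S
    simp [Nat.add_choose_eq]
  rw [hvandermonde]
  refine Submodule.sum_mem _ fun ij hij => ?_
  rw [← mem_antidiagonal.mp hij, add_mul]
  exact mul_mem_degreeLE (ha ij.1) (hb ij.2)

lemma BinomialDegreeLE.sum {ι : Type*} (s : Finset ι) {a : ι → Finset α → ℕ} {d : ℕ}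
    (ha : ∀ i ∈ s, BinomialDegreeLE R (a i) d) : BinomialDegreeLE R (∑ i ∈ s, a i) d := by
  classical
  induction s using Finset.induction_on with
  | empty => simpa using binomialDegreeLE_zero d
  | insert i s hi ih =>
    rw [sum_insert hi]
    exact (ha i (mem_insert_self i s)).add (ih fun j hj => ha j (mem_insert_of_mem hj))

lemma binomialDegreeLE_ite_subset {T : Finset α} {ℓ d : ℕ} (h : ℓ ≠ 0 → #T ≤ d) :
    BinomialDegreeLE R (fun S => if T ⊆ S then ℓ else 0) d := by
  rintro (_ | N)
  · simpa [Pi.one_def] using one_mem_degreeLE 0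
  · by_cases hℓ : ℓ = 0
    · simpa [hℓ, Pi.zero_def] using (degreeLE R _).zero_mem
    have hmonomial : (fun S => ((if T ⊆ S then ℓ else 0).choose (N + 1) : R))
        = (ℓ.choose (N + 1) : R) • monomial R T := by
      funext S
      by_cases hT : T ⊆ S <;> simp [monomial, hT]
    rw [hmonomial]
    refine Submodule.smul_mem _ _ (monomial_mem_degreeLE ((h hℓ).trans ?_))
    exact Nat.le_mul_of_pos_left d N.succ_pos

theorem binomialDegreeLE_sum_powerset [Fintype α] {ℓ : Finset α → ℕ} {d : ℕ}
    (hℓ : ∀ T, ℓ T ≠ 0 → #T ≤ d) : BinomialDegreeLE R (fun S => ∑ T ∈ S.powerset, ℓ T) d := by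
  have hsum : (fun S => ∑ T ∈ S.powerset, ℓ T) =
      ∑ T : Finset α, fun S : Finset α => if T ⊆ S then ℓ T else 0 := by
    funext S
    simp [sum_ite, filter_subset_univ]
  rw [hsum]
  exact BinomialDegreeLE.sum _ fun T _ => binomialDegreeLE_ite_subset (hℓ T)

end Binomial

namespace BinomialDegreeLE

variable {α : Type*} [DecidableEq α] {p : ℕ} [hp : Fact p.Prime]

theorem indicator_pow_dvd_mem_degreeLE {a : Finset α → ℕ} {d : ℕ}
    (ha : BinomialDegreeLE (ZMod p) a d) (k : ℕ) :
    (fun S => if p ^ k ∣ a S then (1 : ZMod p) else 0) ∈ degreeLE (ZMod p) ((p ^ k - 1) * d) := by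
  have hprod : (fun S => if p ^ k ∣ a S then (1 : ZMod p) else 0) =
      ∏ j ∈ range k, (1 - (fun S => ((a S).choose (p ^ j) : ZMod p)) ^ (p - 1)) := by
    funext S
    simp only [prod_apply, Pi.sub_apply, Pi.one_apply, Pi.pow_apply, ZMod.natCast_choose_prime_pow_s13,
      ZMod.prod_one_sub_digit_pow_eq_ite]
  rw [hprod, ← Nat.sum_range_pred_mul_pow_mul hp.out.one_le k d]
  refine prod_mem_degreeLE _ _ _ fun j _ => Submodule.sub_mem _ (one_mem_degreeLE _) ?_
  exact pow_mem_degreeLE (ha (p ^ j)) (p - 1)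

end BinomialDegreeLE

section NonclassicalPolynomial

variable {α V : Type*} [DecidableEq α] [AddCommGroup V]

lemma exists_natCast_sum_powerset_eq {q d : ℕ} [NeZero q] (G : Finset α → ZMod q)
    (hG : ∀ T, d < #T → mobius G T = 0) :
    ∃ ℓ : Finset α → ℕ, (∀ T, ℓ T ≠ 0 → #T ≤ d) ∧
      ∀ S, ((∑ T ∈ S.powerset, ℓ T : ℕ) : ZMod q) = G S := by
  refine ⟨fun T => (mobius G T).val, fun T hT => not_lt.mp fun h => hT ?_, fun S => ?_⟩
  · simp [hG T h]
  · simp [sum_powerset_mobius]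

theorem exists_sum_powerset_dvd_iff {q d : ℕ} [NeZero q] (v : α → V) {f : V → UnitAddCircle}
    (hf : IsNCPoly d f) (hval : ∀ S, f (∑ i ∈ S, v i) ∈ Set.range (ZMod.toAddCircle (N := q))) :
    ∃ ℓ : Finset α → ℕ, (∀ T, ℓ T ≠ 0 → #T ≤ d) ∧
      ∀ S, f (∑ i ∈ S, v i) = 0 ↔ q ∣ ∑ T ∈ S.powerset, ℓ T := by
  choose G hG using hval
  have hmobius : ∀ T, d < #T → mobius G T = 0 := by
    intro T hT
    rw [← ZMod.toAddCircle_eq_zero, map_mobius, show ZMod.toAddCircle ∘ G = _ from funext hG]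
    exact mobius_comp_sum_eq_zero v T f fun hs hlen =>
      hf.mono (e := #T - 1) (by omega) hs (by omega)
  obtain ⟨ℓ, hℓ, hsum⟩ := exists_natCast_sum_powerset_eq G hmobius
  refine ⟨ℓ, hℓ, fun S => ?_⟩
  rw [← hG S, ZMod.toAddCircle_eq_zero, ← hsum S, ZMod.natCast_eq_zero_iff]

end NonclassicalPolynomial

end BoolCube

open BoolCube in
/-- A nonclassical polynomial of degree `d` and values in `(1/p^k)ℤ/ℤ` on the
hypercube, vanishing at `0`, has another Boolean root once `n > (p^k-1)d`. -/
theorem stmt13 (p n d k : ℕ) [Fact p.Prime]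
    (f : (Fin n → ZMod p) → AddCircle (1 : ℝ))
    (hdeg : IsNCPoly d f)
    (hval : ∀ x : Fin n → ZMod p, IsBool x →
      ∃ m : ℤ, f x = ((((m : ℝ) / p ^ k : ℝ)) : AddCircle (1 : ℝ)))
    (h0 : f 0 = 0) (hn : (p ^ k - 1) * d < n) :
    ∃ x : Fin n → ZMod p, IsBool x ∧ x ≠ 0 ∧ f x = 0 := by
  by_contra! hcon
  have : NeZero (p ^ k) := ⟨pow_ne_zero k (Fact.out : p.Prime).ne_zero⟩
  have hbool (S : Finset (Fin n)) : IsBool (∑ i ∈ S, Pi.single i (1 : ZMod p)) := fun i => by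
    by_cases hi : i ∈ S <;> simp [hi]
  obtain ⟨ℓ, hℓ, hzero⟩ := exists_sum_powerset_dvd_iff (q := p ^ k) (fun i => Pi.single i 1) hdeg
    fun S => by
      obtain ⟨m, hm⟩ := hval _ (hbool S)
      exact ⟨m, by rw [hm, ZMod.toAddCircle_intCast]; push_cast; rfl⟩
  have hOR : (fun S : Finset (Fin n) => if p ^ k ∣ ∑ T ∈ S.powerset, ℓ T then (1 : ZMod p) else 0)
      = Pi.single ∅ 1 := by
    funext S
    rcases eq_or_ne S ∅ with rfl | hS
    · simpa [h0] using (hzero ∅).mp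
    · have hne : ∑ i ∈ S, Pi.single i (1 : ZMod p) ≠ 0 := fun h => by
        obtain ⟨i, hi⟩ := nonempty_iff_ne_empty.mpr hS
        simpa [hi] using congr_fun h i
      simp [hS, ← hzero, hcon _ (hbool S) hne]
  exact pi_single_empty_notMem_degreeLE (R := ZMod p) (by simpa using hn)
    (hOR ▸ (binomialDegreeLE_sum_powerset hℓ).indicator_pow_dvd_mem_degreeLE k)
end
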